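/- arXiv:2410.05504 — 2 statements merged into one kernel-verified Lean document; each statement's English description precedes it below -/
import Mathlib

section
/- Revelation principle: For any ambiguous experiment (σ, μ) with message space M and any receiver strategy τ : M → Δ(A) that maximizes τ ↦ U_r(σ, μ, τ), there exists a canonical ambiguous experiment (σ*, μ) (same index set Θ and same weights μ, with message space A), defined by σ*_θ(a|ω) = Σ_m τ(a|m) σ_θ(m|ω), such that (σ*, μ) is obedient (the obedient strategy τ* maximizes τ' ↦ U_r(σ*, μ, τ')) and u_i(σ_θ, τ) = u_i(σ*_θ, τ*) for every i ∈ {s, r} and every θ ∈ Θ. -/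
open Finset

/-- A stochastic kernel from `X` to `Y`: each row `k x` is a probability vector on `Y`.
An experiment is a kernel from states `Ω` to messages; a receiver strategy is a kernel
from messages to actions `A`. -/
def IsKernel {X Y : Type*} [Fintype Y] (k : X → Y → ℝ) : Prop :=
  (∀ x y, 0 ≤ k x y) ∧ ∀ x, ∑ y, k x y = 1

/-- A probability vector on a finite type. -/
def IsProb {Θ : Type*} [Fintype Θ] (μ : Θ → ℝ) : Prop :=
  (∀ θ, 0 ≤ μ θ) ∧ ∑ θ, μ θ = 1

/-- The obedient strategy `τ*`: take the recommended action with probability one. -/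
noncomputable def tauStar {A : Type*} [DecidableEq A] : A → A → ℝ :=
  fun m a => if a = m then (1 : ℝ) else 0

/-- Expected payoff `u_i(σ, τ) = ∑_{ω,m,a} p(ω) σ(m|ω) τ(a|m) u_i(a,ω)`. -/
noncomputable def expPayoff {Ω M A : Type*} [Fintype Ω] [Fintype M] [Fintype A]
    (p : Ω → ℝ) (u : A → Ω → ℝ) (σ : Ω → M → ℝ) (τ : M → A → ℝ) : ℝ :=
  ∑ ω, ∑ m, ∑ a, p ω * σ ω m * τ m a * u a ω

/-- Obedience of a single (unambiguous) canonical experiment: `τ*` is a best reply. -/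
def Obedient {Ω A : Type*} [Fintype Ω] [Fintype A] [DecidableEq A]
    (p : Ω → ℝ) (ur : A → Ω → ℝ) (σ : Ω → A → ℝ) : Prop :=
  ∀ τ : A → A → ℝ, IsKernel τ → expPayoff p ur σ τ ≤ expPayoff p ur σ tauStar

/-- Obedience of an ambiguous experiment `(σ, μ)` for a smooth-ambiguity receiver with
index `φr`:  `τ*` maximizes `τ ↦ U_r(σ, μ, τ) = φr⁻¹(∑_θ μ_θ φr(u_r(σ_θ, τ)))`; since `φr`
is strictly increasing this is equivalent to `τ*` maximizing `τ ↦ ∑_θ μ_θ φr(u_r(σ_θ, τ))`. -/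
def AmbObedient {Ω A Θ : Type*} [Fintype Ω] [Fintype A] [DecidableEq A] [Fintype Θ]
    (φr : ℝ → ℝ) (p : Ω → ℝ) (ur : A → Ω → ℝ) (σ : Θ → Ω → A → ℝ) (μ : Θ → ℝ) : Prop :=
  ∀ τ : A → A → ℝ, IsKernel τ →
    ∑ θ, μ θ * φr (expPayoff p ur (σ θ) τ) ≤ ∑ θ, μ θ * φr (expPayoff p ur (σ θ) tauStar)

/-- A smooth ambiguity index: strictly increasing, concave, differentiable. -/
def SmoothIndex (φ : ℝ → ℝ) : Prop :=
  StrictMono φ ∧ ConcaveOn ℝ Set.univ φ ∧ Differentiable ℝ φ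

/-- Two experiments are (strictly) Pareto ranked: under obedience, sender and receiver
strictly rank them the same way. -/
def ParetoRanked {Ω A : Type*} [Fintype Ω] [Fintype A] [DecidableEq A]
    (p : Ω → ℝ) (us ur : A → Ω → ℝ) (σ σ' : Ω → A → ℝ) : Prop :=
  (expPayoff p us σ' tauStar < expPayoff p us σ tauStar ∧
      expPayoff p ur σ' tauStar < expPayoff p ur σ tauStar) ∨
  (expPayoff p us σ tauStar < expPayoff p us σ' tauStar ∧
      expPayoff p ur σ tauStar < expPayoff p ur σ' tauStar)

/-- Two experiments are weakly Pareto ranked. -/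
def WeaklyParetoRanked {Ω A : Type*} [Fintype Ω] [Fintype A] [DecidableEq A]
    (p : Ω → ℝ) (us ur : A → Ω → ℝ) (σ σ' : Ω → A → ℝ) : Prop :=
  (expPayoff p us σ' tauStar ≤ expPayoff p us σ tauStar ∧
      expPayoff p ur σ' tauStar ≤ expPayoff p ur σ tauStar) ∨
  (expPayoff p us σ tauStar ≤ expPayoff p us σ' tauStar ∧
      expPayoff p ur σ tauStar ≤ expPayoff p ur σ' tauStar)

/-- Pointwise convex combination of two experiments. -/
noncomputable def mixExp {Ω A : Type*} (lam : ℝ) (σ1 σ2 : Ω → A → ℝ) : Ω → A → ℝ :=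
  fun ω a => lam * σ1 ω a + (1 - lam) * σ2 ω a

/-- `(σbar, σlo, lam)` is a Pareto-ranked splitting of the experiment `σ`. -/
def ParetoRankedSplitting {Ω A : Type*} [Fintype Ω] [Fintype A] [DecidableEq A]
    (p : Ω → ℝ) (us ur : A → Ω → ℝ) (σbar σlo : Ω → A → ℝ) (lam : ℝ) (σ : Ω → A → ℝ) : Prop :=
  IsKernel σbar ∧ IsKernel σlo ∧ lam ∈ Set.Ioo (0 : ℝ) 1 ∧
    mixExp lam σbar σlo = σ ∧ ParetoRanked p us ur σbar σlo

/-- The `((σbar, σlo), lam)`-probability premium of a player with utility `u` and index `φ`. -/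
noncomputable def probPremium {Ω A : Type*} [Fintype Ω] [Fintype A] [DecidableEq A]
    (p : Ω → ℝ) (u : A → Ω → ℝ) (φ : ℝ → ℝ) (σbar σlo : Ω → A → ℝ) (lam : ℝ) : ℝ :=
  (φ (expPayoff p u (mixExp lam σbar σlo) tauStar) -
      lam * φ (expPayoff p u σbar tauStar) - (1 - lam) * φ (expPayoff p u σlo tauStar)) /
    (φ (expPayoff p u σbar tauStar) - φ (expPayoff p u σlo tauStar))

/-- The set of `φs`-transformed sender values attainable by obedient ambiguous experiments;
the value of the sender's problem `(P)` equals `u` iff `φs u` is the least upper bound of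
this set (since `φs` is continuous and strictly increasing). -/
def senderValues {Ω A : Type*} [Fintype Ω] [Fintype A] [DecidableEq A]
    (φs φr : ℝ → ℝ) (p : Ω → ℝ) (us ur : A → Ω → ℝ) : Set ℝ :=
  {x | ∃ (n : ℕ) (σ : Fin n → Ω → A → ℝ) (μ : Fin n → ℝ),
    (∀ j, IsKernel (σ j)) ∧ IsProb μ ∧ AmbObedient φr p ur σ μ ∧
    x = ∑ j, μ j * φs (expPayoff p us (σ j) tauStar)}

/-- The set of feasible values of the auxiliary program `(Φ*(u))`: sums
`∑_θ λ_θ Φ_u(σ_θ)` over splittings `(λ_θ, σ_θ)` of obedient experiments, where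
`Φ_u(σ) = (φs(u_s(σ,τ*)) − φs(u)) / φr'(u_r(σ,τ*))`. -/
def phiProgram {Ω A : Type*} [Fintype Ω] [Fintype A] [DecidableEq A]
    (φs φr : ℝ → ℝ) (p : Ω → ℝ) (us ur : A → Ω → ℝ) (u : ℝ) : Set ℝ :=
  {x | ∃ (n : ℕ) (σ : Fin n → Ω → A → ℝ) (lam : Fin n → ℝ),
    (∀ j, IsKernel (σ j)) ∧ IsProb lam ∧
    Obedient p ur (fun ω a => ∑ j, lam j * σ j ω a) ∧
    x = ∑ j, lam j * ((φs (expPayoff p us (σ j) tauStar) - φs u) /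
      deriv φr (expPayoff p ur (σ j) tauStar))}

/-!
Relabel every message by the action that `τ` recommends: each `σ_θ` is garbled by the same
kernel `τ`, so the obedient receiver of the garbled experiment reproduces `(σ_θ, τ)` for every
`θ`. A deviation `τ'` from obedience in the garbled experiment amounts to playing the composite
strategy "first `τ`, then `τ'`" in the original one, which cannot beat the best reply `τ`.
-/

def garble {X Y Z : Type*} [Fintype Y] (σ : X → Y → ℝ) (τ : Y → Z → ℝ) : X → Z → ℝ :=
  fun x z => ∑ y, τ y z * σ x y

theorem IsKernel.garble {X Y Z : Type*} [Fintype Y] [Fintype Z] {σ : X → Y → ℝ}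
    {τ : Y → Z → ℝ} (hσ : IsKernel σ) (hτ : IsKernel τ) :
    IsKernel (garble σ τ) := by
  refine ⟨fun x z => sum_nonneg fun y _ => mul_nonneg (hτ.1 y z) (hσ.1 x y), fun x => ?_⟩
  simp only [_root_.garble, sum_comm (γ := Z), ← sum_mul, hτ.2, one_mul, hσ.2]

theorem garble_tauStar {M A : Type*} [Fintype A] [DecidableEq A] (τ : M → A → ℝ) :
    garble τ tauStar = τ := by
  funext m a
  simp [garble, tauStar]

section Payoff

variable {Ω M A : Type*} [Fintype Ω] [Fintype M] [Fintype A]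

theorem expPayoff_garble (p : Ω → ℝ) (u : A → Ω → ℝ) (σ : Ω → M → ℝ) (τ : M → A → ℝ)
    (τ' : A → A → ℝ) :
    expPayoff p u (garble σ τ) τ' = expPayoff p u σ (garble τ τ') := by
  unfold expPayoff garble
  refine sum_congr rfl fun ω _ => ?_
  simp only [sum_mul, mul_sum]
  rw [sum_comm_cycle]
  exact sum_congr rfl fun _ _ => sum_comm.trans <|
    sum_congr rfl fun _ _ => sum_congr rfl fun _ _ => by ring

theorem expPayoff_garble_tauStar [DecidableEq A] (p : Ω → ℝ) (u : A → Ω → ℝ)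
    (σ : Ω → M → ℝ) (τ : M → A → ℝ) :
    expPayoff p u (garble σ τ) tauStar = expPayoff p u σ τ := by
  rw [expPayoff_garble, garble_tauStar]

end Payoff

theorem ambObedient_garble {Ω M A Θ : Type*} [Fintype Ω] [Fintype M] [Fintype A]
    [DecidableEq A] [Fintype Θ] {φr : ℝ → ℝ} {p : Ω → ℝ} {ur : A → Ω → ℝ}
    {σ : Θ → Ω → M → ℝ} {μ : Θ → ℝ} {τ : M → A → ℝ} (hτ : IsKernel τ)
    (hbest : ∀ τ' : M → A → ℝ, IsKernel τ' →
      ∑ θ, μ θ * φr (expPayoff p ur (σ θ) τ') ≤ ∑ θ, μ θ * φr (expPayoff p ur (σ θ) τ)) :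
    AmbObedient φr p ur (fun θ => garble (σ θ) τ) μ := by
  intro τ' hτ'
  simpa only [expPayoff_garble, garble_tauStar] using hbest _ (hτ.garble hτ')

theorem revelation_principle_general
    {Ω M A Θ : Type*} [Fintype Ω] [Fintype M] [Fintype A] [DecidableEq A] [Fintype Θ]
    (p : Ω → ℝ) (us ur : A → Ω → ℝ)
    (φr : ℝ → ℝ)
    (σ : Θ → Ω → M → ℝ) (hσ : ∀ θ, IsKernel (σ θ))
    (μ : Θ → ℝ)
    (τ : M → A → ℝ) (hτ : IsKernel τ)
    (hbest : ∀ τ' : M → A → ℝ, IsKernel τ' →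
      ∑ θ, μ θ * φr (expPayoff p ur (σ θ) τ') ≤ ∑ θ, μ θ * φr (expPayoff p ur (σ θ) τ)) :
    (∀ θ, IsKernel (fun ω a => ∑ m, τ m a * σ θ ω m)) ∧
    AmbObedient φr p ur (fun θ ω a => ∑ m, τ m a * σ θ ω m) μ ∧
    (∀ θ,
      expPayoff p us (σ θ) τ = expPayoff p us (fun ω a => ∑ m, τ m a * σ θ ω m) tauStar ∧
      expPayoff p ur (σ θ) τ = expPayoff p ur (fun ω a => ∑ m, τ m a * σ θ ω m) tauStar) :=
  ⟨fun θ => (hσ θ).garble hτ, ambObedient_garble hτ hbest,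
    fun θ => ⟨(expPayoff_garble_tauStar p us (σ θ) τ).symm,
      (expPayoff_garble_tauStar p ur (σ θ) τ).symm⟩⟩

/-- Revelation principle, Proposition 1:  for any ambiguous experiment
`(σ, μ)` with message space `M` and any receiver strategy `τ` maximizing
`τ ↦ U_r(σ, μ, τ)`, the canonical ambiguous experiment `(σ*, μ)` with
`σ*_θ(a|ω) = ∑_m τ(a|m) σ_θ(m|ω)` is obedient and yields the same payoffs. -/
theorem revelation_principle
    {Ω M A Θ : Type*} [Fintype Ω] [Fintype M] [Fintype A] [DecidableEq A] [Fintype Θ]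
    (p : Ω → ℝ) (hp : IsProb p) (us ur : A → Ω → ℝ)
    (φs φr : ℝ → ℝ) (hφs : SmoothIndex φs) (hφr : SmoothIndex φr)
    (σ : Θ → Ω → M → ℝ) (hσ : ∀ θ, IsKernel (σ θ))
    (μ : Θ → ℝ) (hμ : IsProb μ)
    (τ : M → A → ℝ) (hτ : IsKernel τ)
    (hbest : ∀ τ' : M → A → ℝ, IsKernel τ' →
      ∑ θ, μ θ * φr (expPayoff p ur (σ θ) τ') ≤ ∑ θ, μ θ * φr (expPayoff p ur (σ θ) τ)) :
    (∀ θ, IsKernel (fun ω a => ∑ m, τ m a * σ θ ω m)) ∧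
    AmbObedient φr p ur (fun θ ω a => ∑ m, τ m a * σ θ ω m) μ ∧
    (∀ θ,
      expPayoff p us (σ θ) τ = expPayoff p us (fun ω a => ∑ m, τ m a * σ θ ω m) tauStar ∧
      expPayoff p ur (σ θ) τ = expPayoff p ur (fun ω a => ∑ m, τ m a * σ θ ω m) tauStar) :=
  revelation_principle_general p us ur φr σ hσ μ τ hτ hbest
end

section
/- Effective-measure characterization of obedience: A canonical ambiguous experiment (σ, μ) is obedient (τ* maximizes τ ↦ U_r(σ, μ, τ)) if, and only if, the single (unambiguous) experiment σ* := Σ_θ em_θ σ_θ is obedient, where em ∈ Δ(Θ) is the receiver's effective measure defined by em_θ = μ_θ φ_r'(u_r(σ_θ, τ*)) / Σ_{θ'} μ_{θ'} φ_r'(u_r(σ_{θ'}, τ*)). -/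
/-!
Since `u_r(σ_θ, τ)` is linear in `τ` and `φr` is concave, `τ ↦ ∑_θ μ_θ φr(u_r(σ_θ, τ))` is
concave on the convex set of strategies, so `τ*` maximizes it iff no direction `τ - τ*` has
positive derivative at `τ*`. That derivative is
`∑_θ μ_θ φr'(u_r(σ_θ, τ*)) (u_r(σ_θ, τ) - u_r(σ_θ, τ*))`, which, by linearity of `u_r` in the
experiment, is a positive multiple of `u_r(σ*, τ) - u_r(σ*, τ*)`.
-/

open Finset

lemma ConcaveOn.le_add_deriv_mul_sub {S : Set ℝ} {φ : ℝ → ℝ} (hφ : ConcaveOn ℝ S φ) {x y : ℝ}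
    (hx : x ∈ S) (hy : y ∈ S) (hd : DifferentiableAt ℝ φ x) :
    φ y ≤ φ x + deriv φ x * (y - x) := by
  rcases lt_trichotomy x y with hxy | rfl | hyx
  · have h := hφ.slope_le_deriv hx hy hxy hd
    rw [slope_def_field, div_le_iff₀ (sub_pos.2 hxy)] at h
    linarith
  · simp
  · have h := hφ.deriv_le_slope hy hx hyx hd
    rw [slope_def_field, le_div_iff₀ (sub_pos.2 hyx)] at h
    linarith

/-- Sufficiency of the first-order condition for the concave objective `y ↦ ∑ θ, μ θ * φ (y θ)`,
whose gradient at `x` is `θ ↦ μ θ * deriv φ (x θ)`. -/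
lemma sum_mul_le_of_sum_mul_deriv_mul_le {Θ : Type*} [Fintype Θ] {φ : ℝ → ℝ}
    (hφ : ConcaveOn ℝ Set.univ φ) {μ x y : Θ → ℝ} (hd : ∀ θ, DifferentiableAt ℝ φ (x θ))
    (hμ : ∀ θ, 0 ≤ μ θ)
    (h : ∑ θ, μ θ * deriv φ (x θ) * y θ ≤ ∑ θ, μ θ * deriv φ (x θ) * x θ) :
    ∑ θ, μ θ * φ (y θ) ≤ ∑ θ, μ θ * φ (x θ) :=
  calc ∑ θ, μ θ * φ (y θ)
      ≤ ∑ θ, μ θ * (φ (x θ) + deriv φ (x θ) * (y θ - x θ)) :=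
        sum_le_sum fun θ _ => mul_le_mul_of_nonneg_left
          (hφ.le_add_deriv_mul_sub trivial trivial (hd θ)) (hμ θ)
    _ = ∑ θ, μ θ * φ (x θ) +
          (∑ θ, μ θ * deriv φ (x θ) * y θ - ∑ θ, μ θ * deriv φ (x θ) * x θ) := by
        rw [← sum_sub_distrib, ← sum_add_distrib]
        exact sum_congr rfl fun θ _ => by ring
    _ ≤ ∑ θ, μ θ * φ (x θ) := by linarith

/-- Necessity of the first-order condition, by Fermat's rule on the segment from `x` to `y`. -/
lemma sum_mul_deriv_mul_le_of_isMaxOn {Θ : Type*} [Fintype Θ] {φ : ℝ → ℝ} {μ x y : Θ → ℝ}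
    (hd : ∀ θ, DifferentiableAt ℝ φ (x θ))
    (hmax : IsMaxOn (fun t => ∑ θ, μ θ * φ ((1 - t) * x θ + t * y θ)) (Set.Icc 0 1) 0) :
    ∑ θ, μ θ * deriv φ (x θ) * y θ ≤ ∑ θ, μ θ * deriv φ (x θ) * x θ := by
  have hderiv : HasDerivAt (fun t => ∑ θ, μ θ * φ ((1 - t) * x θ + t * y θ))
      (∑ θ, μ θ * (deriv φ (x θ) * (y θ - x θ))) 0 := by
    refine HasDerivAt.fun_sum fun θ _ => HasDerivAt.const_mul _ ?_
    have hline : HasDerivAt (fun t : ℝ => (1 - t) * x θ + t * y θ) (y θ - x θ) 0 :=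
      ((((hasDerivAt_id' (0 : ℝ)).const_sub 1).mul_const (x θ)).fun_add
        ((hasDerivAt_id' (0 : ℝ)).mul_const (y θ))).congr_deriv (by ring)
    exact HasDerivAt.comp (0 : ℝ) (by simpa using (hd θ).hasDerivAt) hline
  have hcone : (1 : ℝ) ∈ posTangentConeAt (Set.Icc (0 : ℝ) 1) 0 :=
    mem_posTangentConeAt_of_segment_subset (by simp [segment_eq_Icc])
  have h := hmax.localize.hasFDerivWithinAt_nonpos hderiv.hasFDerivAt.hasFDerivWithinAt hcone
  rw [ContinuousLinearMap.toSpanSingleton_apply_one] at h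
  rw [← sub_nonpos, ← sum_sub_distrib]
  convert h using 2 with θ
  ring

lemma setOf_isKernel_eq_pi {X Y : Type*} [Fintype Y] :
    {k : X → Y → ℝ | IsKernel k} = Set.univ.pi fun _ => stdSimplex ℝ Y := by
  ext k
  simp [IsKernel, stdSimplex, forall_and]

lemma convex_setOf_isKernel {X Y : Type*} [Fintype Y] :
    Convex ℝ {k : X → Y → ℝ | IsKernel k} := by
  rw [setOf_isKernel_eq_pi]
  exact convex_pi fun _ _ => convex_stdSimplex ℝ Y

lemma isKernel_tauStar {A : Type*} [Fintype A] [DecidableEq A] : IsKernel (tauStar (A := A)) :=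
  ⟨fun m a => by unfold tauStar; positivity, fun m => by simp [tauStar]⟩

section expPayoff

variable {Ω M A : Type*} [Fintype Ω] [Fintype M] [Fintype A] (p : Ω → ℝ) (u : A → Ω → ℝ)

lemma expPayoff_smul_add_smul (σ : Ω → M → ℝ) (τ₁ τ₂ : M → A → ℝ) (a b : ℝ) :
    expPayoff p u σ (a • τ₁ + b • τ₂) = a * expPayoff p u σ τ₁ + b * expPayoff p u σ τ₂ := by
  simp only [expPayoff, mul_sum, ← sum_add_distrib]
  refine sum_congr rfl fun ω _ => sum_congr rfl fun m _ => sum_congr rfl fun a _ => ?_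
  simp only [Pi.add_apply, Pi.smul_apply, smul_eq_mul]
  ring

lemma expPayoff_sum_mul {Θ : Type*} [Fintype Θ] (c : Θ → ℝ) (σ : Θ → Ω → M → ℝ)
    (τ : M → A → ℝ) :
    expPayoff p u (fun ω m => ∑ θ, c θ * σ θ ω m) τ = ∑ θ, c θ * expPayoff p u (σ θ) τ := by
  simp only [expPayoff, mul_sum, sum_mul]
  conv_rhs => rw [sum_comm]
  refine sum_congr rfl fun ω _ => ?_
  conv_rhs => rw [sum_comm]
  refine sum_congr rfl fun m _ => ?_
  conv_rhs => rw [sum_comm]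
  exact sum_congr rfl fun a _ => sum_congr rfl fun θ _ => by ring

end expPayoff

section Obedience

variable {Ω A Θ : Type*} [Fintype Ω] [Fintype A] [DecidableEq A] [Fintype Θ]
  (p : Ω → ℝ) (ur : A → Ω → ℝ) (σ : Θ → Ω → A → ℝ)

lemma obedient_sum_mul_iff (c : Θ → ℝ) :
    Obedient p ur (fun ω a => ∑ θ, c θ * σ θ ω a) ↔ ∀ τ, IsKernel τ →
      ∑ θ, c θ * expPayoff p ur (σ θ) τ ≤ ∑ θ, c θ * expPayoff p ur (σ θ) tauStar := by
  simp only [Obedient, expPayoff_sum_mul]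

/-- The weights `μ θ * φ' (u_r(σ_θ, τ*))` are the unnormalized effective measure. -/
theorem ambObedient_iff {φ : ℝ → ℝ} (hφ : ConcaveOn ℝ Set.univ φ) (hd : Differentiable ℝ φ)
    {μ : Θ → ℝ} (hμ : ∀ θ, 0 ≤ μ θ) :
    AmbObedient φ p ur σ μ ↔ ∀ τ, IsKernel τ →
      ∑ θ, μ θ * deriv φ (expPayoff p ur (σ θ) tauStar) * expPayoff p ur (σ θ) τ ≤
        ∑ θ, μ θ * deriv φ (expPayoff p ur (σ θ) tauStar) * expPayoff p ur (σ θ) tauStar := by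
  refine ⟨fun h τ hτ => sum_mul_deriv_mul_le_of_isMaxOn (fun θ => hd _) fun t ht => ?_,
    fun h τ hτ => sum_mul_le_of_sum_mul_deriv_mul_le hφ (fun θ => hd _) hμ (h τ hτ)⟩
  have hmix := convex_setOf_isKernel isKernel_tauStar hτ (sub_nonneg.2 ht.2) ht.1 (by ring)
  simpa [expPayoff_smul_add_smul] using h _ hmix

end Obedience

lemma IsProb.sum_mul_pos {Θ : Type*} [Fintype Θ] {μ f : Θ → ℝ} (hμ : IsProb μ)
    (hf : ∀ θ, 0 < f θ) : 0 < ∑ θ, μ θ * f θ := by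
  obtain ⟨θ, -, hθ⟩ := (sum_pos_iff_of_nonneg fun θ _ => hμ.1 θ).1 (hμ.2 ▸ one_pos)
  exact (sum_pos_iff_of_nonneg fun θ _ => mul_nonneg (hμ.1 θ) (hf θ).le).2
    ⟨θ, mem_univ θ, mul_pos hθ (hf θ)⟩

theorem effective_measure_obedience_general
    {Ω A Θ : Type*} [Fintype Ω] [Fintype A] [DecidableEq A] [Fintype Θ]
    (p : Ω → ℝ) (ur : A → Ω → ℝ)
    (φr : ℝ → ℝ) (hφr : SmoothIndex φr) (hφr' : ∀ x, 0 < deriv φr x)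
    (σ : Θ → Ω → A → ℝ)
    (μ : Θ → ℝ) (hμ : IsProb μ) :
    AmbObedient φr p ur σ μ ↔
      Obedient p ur (fun ω a => ∑ θ,
        (μ θ * deriv φr (expPayoff p ur (σ θ) tauStar) /
          ∑ θ', μ θ' * deriv φr (expPayoff p ur (σ θ') tauStar)) * σ θ ω a) := by
  have hC := hμ.sum_mul_pos fun θ => hφr' (expPayoff p ur (σ θ) tauStar)
  rw [ambObedient_iff p ur σ hφr.2.1 hφr.2.2 hμ.1, obedient_sum_mul_iff]
  refine forall₂_congr fun τ _ => ?_
  simp only [div_mul_eq_mul_div, ← sum_div]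
  exact (div_le_div_iff_of_pos_right hC).symm

/-- Lemma 1: the ambiguous experiment `(σ, μ)` is obedient iff the
unambiguous experiment `σ* = ∑_θ em_θ σ_θ` is obedient, where `em` is the receiver's
effective measure `em_θ = μ_θ φr'(u_r(σ_θ,τ*)) / ∑_{θ'} μ_{θ'} φr'(u_r(σ_{θ'},τ*))`. -/
theorem effective_measure_obedience
    {Ω A Θ : Type*} [Fintype Ω] [Fintype A] [DecidableEq A] [Fintype Θ]
    (p : Ω → ℝ) (hp : IsProb p) (ur : A → Ω → ℝ)
    (φr : ℝ → ℝ) (hφr : SmoothIndex φr) (hφr' : ∀ x, 0 < deriv φr x)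
    (σ : Θ → Ω → A → ℝ) (hσ : ∀ θ, IsKernel (σ θ))
    (μ : Θ → ℝ) (hμ : IsProb μ) :
    AmbObedient φr p ur σ μ ↔
      Obedient p ur (fun ω a => ∑ θ,
        (μ θ * deriv φr (expPayoff p ur (σ θ) tauStar) /
          ∑ θ', μ θ' * deriv φr (expPayoff p ur (σ θ') tauStar)) * σ θ ω a) :=
  effective_measure_obedience_general p ur φr hφr hφr' σ μ hμ
end
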